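/- arXiv:1003.1550 — 2 statements merged into one kernel-verified Lean document; each statement's English description precedes it below -/
import Mathlib

section
/- (Neutrality via P-sets) Suppose 𝕋ⁿ = ℝ^{m×n} and f is an implementable social choice function. Then f is neutral if and only if P^f(a,b) = P^f(c,d) for all alternatives a, b, c, d ∈ A with a ≠ b and c ≠ d. -/
open Function

/-- A type profile: column `t a` is the utility vector in `ℝⁿ` for alternative `a`;
agent `i`'s type (row) is `fun a => t a i`.  The domain is unrestricted: `𝕋ⁿ = ℝ^{m×n}`. -/
abbrev Profile (n : ℕ) (A : Type*) := A → Fin n → ℝ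

/-- Payment rule `p` implements `f` in dominant strategies:
no agent `i` can gain by a unilateral deviation (a change of his own row only). -/
def Implements {n : ℕ} {A : Type*} (f : Profile n A → A)
    (p : Profile n A → Fin n → ℝ) : Prop :=
  ∀ t s : Profile n A, ∀ i : Fin n,
    (∀ j : Fin n, j ≠ i → ∀ a : A, s a j = t a j) →
    t (f t) i + p t i ≥ t (f s) i + p s i

/-- `f` is implementable in dominant strategies. -/
def Implementable {n : ℕ} {A : Type*} (f : Profile n A → A) : Prop :=
  ∃ p, Implements f p

/-- The choice set `C^f(t)`: alternatives `a` such that raising the column of `a`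
by any strictly positive `ε` makes `f` choose `a`. -/
def ChoiceSet {n : ℕ} {A : Type*} [DecidableEq A]
    (f : Profile n A → A) (t : Profile n A) : Set A :=
  {a | ∀ ε : Fin n → ℝ, (∀ i, 0 < ε i) →
    f (Function.update t a (t a + ε)) = a}

/-- `f` is neutral: permuting the columns of a profile permutes the choice set
accordingly (the profile `s` induced by `ρ` has `s^{ρ a} = t^a`, i.e. `s b = t (ρ⁻¹ b)`). -/
def Neutral {n : ℕ} {A : Type*} [DecidableEq A] (f : Profile n A → A) : Prop :=
  ∀ t : Profile n A, ∀ ρ : Equiv.Perm A,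
    ChoiceSet f (fun b => t (ρ.symm b)) = ρ '' ChoiceSet f t

/-- `f` satisfies non-imposition: every alternative is chosen at some profile. -/
def NonImposition {n : ℕ} {A : Type*} (f : Profile n A → A) : Prop :=
  ∀ a : A, ∃ t : Profile n A, f t = a

/-- The `P`-set of the pair `(a,b)`. -/
def RPSet {n : ℕ} {A : Type*} [DecidableEq A] (f : Profile n A → A) (a b : A) :
    Set (Fin n → ℝ) :=
  {α | ∃ t : Profile n A, a ∈ ChoiceSet f t ∧ t a - t b = α}

/-- The profile `1^a_ε`: column `a` equals the constant vector `ε·𝟙`, all other columns are `0`. -/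
def OneProf {n : ℕ} {A : Type*} [DecidableEq A] (a : A) (ε : ℝ) : Profile n A :=
  fun b => if b = a then (fun _ => ε) else 0

/-!
Implementability gives weak monotonicity agent by agent, hence positive association of
differences: if `a ∈ C(t)` and at `s` the advantage of `a` over every other alternative is
strictly larger than at `t`, then `f s = a`. Lifting two profiles to a common one shows that
`α ∈ P(a,c)` and `β ∈ P(c,a)` never satisfy `α + β ≪ 0`, and from this `a ∈ C(t)` holds iff no
`t^x - t^a - ε` with `ε ≫ 0` lies in `P(x,a)`. Thus the choice set is a function of the
`P`-sets, so equal `P`-sets make it commute with permutations of the alternatives; conversely a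
neutral rule carries `P(a,b)` into `P(σ a, σ b)`.
-/

namespace Implements

variable {n : ℕ} {A : Type*} {f : Profile n A → A} {p : Profile n A → Fin n → ℝ}

theorem weak_monotone (hp : Implements f p) {t s : Profile n A} {i : Fin n}
    (h : ∀ j, j ≠ i → ∀ a, s a j = t a j) :
    s (f t) i - s (f s) i ≤ t (f t) i - t (f s) i := by
  have h₁ := hp t s i h
  have h₂ := hp s t i fun j hj a => (h j hj a).symm
  linarith

theorem apply_eq_of_row_update (hp : Implements f p) {t s : Profile n A} {i : Fin n}
    (h : ∀ j, j ≠ i → ∀ a, s a j = t a j)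
    (hgain : ∀ b, b ≠ f t → s b i - t b i < s (f t) i - t (f t) i) :
    f s = f t := by
  by_contra hne
  have := hp.weak_monotone h
  have := hgain (f s) hne
  linarith

/-- Positive association of differences; the rows are changed one agent at a time. -/
theorem apply_eq_of_forall_sub_lt (hp : Implements f p) {t s : Profile n A}
    (h : ∀ b, b ≠ f t → ∀ i, s b i - t b i < s (f t) i - t (f t) i) :
    f s = f t := by
  classical
  suffices ∀ S : Finset (Fin n), f (fun b => S.piecewise (s b) (t b)) = f t by
    simpa using this Finset.univ
  intro S
  induction S using Finset.induction_on with
  | empty => simp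
  | insert j S hj ih =>
    rw [← ih]
    apply hp.apply_eq_of_row_update (i := j)
    · intro k hk a
      simp [Finset.piecewise_insert, Function.update_of_ne hk]
    · intro b hb
      rw [ih] at hb ⊢
      simpa [Finset.piecewise_insert, hj] using h b hb j

variable [DecidableEq A]

theorem apply_mem_choiceSet (hp : Implements f p) (t : Profile n A) :
    f t ∈ ChoiceSet f t := by
  intro ε hε
  refine hp.apply_eq_of_forall_sub_lt fun b hb i => ?_
  simpa [Function.update_of_ne hb] using hε i

theorem apply_eq_of_mem_choiceSet [Finite A] (hp : Implements f p) {a : A} {t : Profile n A}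
    (ha : a ∈ ChoiceSet f t) {s : Profile n A}
    (h : ∀ x, x ≠ a → ∀ i, t a i - t x i < s a i - s x i) : f s = a := by
  have hε : ∀ i, ∃ δ : ℝ, 0 < δ ∧ ∀ x, x ≠ a → δ < (s a i - s x i) - (t a i - t x i) := by
    intro i
    refine (Filter.Eventually.and (self_mem_nhdsWithin (a := (0 : ℝ)) (s := Set.Ioi 0))
      (Filter.eventually_all.2 fun x => ?_)).exists
    by_cases hx : x = a
    · exact .of_forall fun _ h => absurd hx h
    · filter_upwards [nhdsWithin_le_nhds (eventually_lt_nhds (sub_pos.2 (h x hx i)))]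
        with δ hδ _ using hδ
  choose ε hεpos hεlt using hε
  have hu := ha ε hεpos
  rw [← hu]
  refine hp.apply_eq_of_forall_sub_lt fun b hb i => ?_
  rw [hu] at hb ⊢
  have := hεlt i b hb
  simp only [Function.update_self, Function.update_of_ne hb, Pi.add_apply]
  linarith

theorem not_forall_add_neg [Finite A] (hp : Implements f p) {a c : A} (hac : a ≠ c)
    {α β : Fin n → ℝ} (hα : α ∈ RPSet f a c) (hβ : β ∈ RPSet f c a) :
    ¬ ∀ i, α i + β i < 0 := by
  intro hneg
  obtain ⟨s, hs, rfl⟩ := hα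
  obtain ⟨r, hr, rfl⟩ := hβ
  -- `v` favours `a` over `c` more than `s` does and `c` over `a` more than `r` does,
  -- while all other alternatives are pushed far down.
  let v : Profile n A := fun x i =>
    if x = a then (s a i - s c i) / 2
    else if x = c then (r c i - r a i) / 2
    else min ((s a i - s c i) / 2 - (s a i - s x i)) ((r c i - r a i) / 2 - (r c i - r x i)) - 1
  have hva : ∀ i, v a i = (s a i - s c i) / 2 := by simp [v]
  have hvc : ∀ i, v c i = (r c i - r a i) / 2 := by simp [v, hac.symm]
  have hvx : ∀ x, x ≠ a → x ≠ c → ∀ i, v x i =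
      min ((s a i - s c i) / 2 - (s a i - s x i)) ((r c i - r a i) / 2 - (r c i - r x i)) - 1 := by
    intro x hxa hxc i
    simp [v, hxa, hxc]
  have hfa : f v = a := hp.apply_eq_of_mem_choiceSet hs fun x hxa i => by
    by_cases hxc : x = c
    · subst hxc
      have := hneg i
      simp only [Pi.sub_apply] at this
      rw [hva, hvc]
      linarith
    · rw [hva, hvx x hxa hxc]
      linarith [min_le_left ((s a i - s c i) / 2 - (s a i - s x i))
        ((r c i - r a i) / 2 - (r c i - r x i))]
  have hfc : f v = c := hp.apply_eq_of_mem_choiceSet hr fun x hxc i => by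
    by_cases hxa : x = a
    · subst hxa
      have := hneg i
      simp only [Pi.sub_apply] at this
      rw [hva, hvc]
      linarith
    · rw [hvc, hvx x hxa hxc]
      linarith [min_le_right ((s a i - s c i) / 2 - (s a i - s x i))
        ((r c i - r a i) / 2 - (r c i - r x i))]
  exact hac (hfa.symm.trans hfc)

theorem mem_choiceSet_iff [Finite A] (hp : Implements f p) {t : Profile n A} {a : A} :
    a ∈ ChoiceSet f t ↔ ∀ x, x ≠ a → ∀ ε : Fin n → ℝ, (∀ i, 0 < ε i) →
      t x - t a - ε ∉ RPSet f x a := by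
  constructor
  · intro ha x hxa ε hε hmem
    refine hp.not_forall_add_neg hxa.symm ⟨t, ha, rfl⟩ hmem fun i => ?_
    simp only [Pi.sub_apply]
    linarith [hε i]
  · intro h ε hε
    let u := Function.update t a (t a + ε)
    by_contra hne
    refine h (f u) hne ε hε ⟨u, hp.apply_mem_choiceSet u, ?_⟩
    simp [u, Function.update_of_ne hne]
    abel

theorem neutral_of_RPSet_eq [Finite A] (hp : Implements f p)
    (hP : ∀ a b c d : A, a ≠ b → c ≠ d → RPSet f a b = RPSet f c d) : Neutral f := by
  intro t ρ
  have key : ∀ a, ρ a ∈ ChoiceSet f (fun b => t (ρ.symm b)) ↔ a ∈ ChoiceSet f t := by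
    intro a
    rw [hp.mem_choiceSet_iff, hp.mem_choiceSet_iff]
    refine ρ.forall_congr_right.symm.trans (forall_congr' fun x => ?_)
    simp only [Equiv.symm_apply_apply, ne_eq, EmbeddingLike.apply_eq_iff_eq]
    exact imp_congr_right fun hxa => by rw [hP (ρ x) (ρ a) x a (by simpa) hxa]
  ext y
  obtain ⟨a, rfl⟩ := ρ.surjective y
  simp [key]

end Implements

theorem exists_perm_apply_eq_apply_eq {A : Type*} [DecidableEq A] {a b c d : A}
    (hab : a ≠ b) (hcd : c ≠ d) : ∃ σ : Equiv.Perm A, σ a = c ∧ σ b = d := by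
  refine ⟨(Equiv.swap a c).trans (Equiv.swap (Equiv.swap a c b) d), ?_, by simp⟩
  simp only [Equiv.trans_apply, Equiv.swap_apply_left]
  refine Equiv.swap_apply_of_ne_of_ne (fun h => hab ?_) hcd
  simpa using congrArg (Equiv.swap a c) h

theorem Neutral.RPSet_subset {n : ℕ} {A : Type*} [DecidableEq A] {f : Profile n A → A}
    (hN : Neutral f) (σ : Equiv.Perm A) (a b : A) :
    RPSet f a b ⊆ RPSet f (σ a) (σ b) := by
  rintro α ⟨t, hat, rfl⟩
  exact ⟨fun x => t (σ.symm x), by rw [hN]; exact ⟨a, hat, rfl⟩, by simp⟩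

theorem neutral_iff_psets_equal_general
    {n : ℕ} {A : Type*} [Fintype A] [DecidableEq A]
    (f : Profile n A → A)
    (hf : Implementable f) :
    Neutral f ↔ ∀ a b c d : A, a ≠ b → c ≠ d → RPSet f a b = RPSet f c d := by
  obtain ⟨p, hp⟩ := hf
  refine ⟨fun hN a b c d hab hcd => ?_, hp.neutral_of_RPSet_eq⟩
  obtain ⟨σ, rfl, rfl⟩ := exists_perm_apply_eq_apply_eq hab hcd
  refine (hN.RPSet_subset σ a b).antisymm ?_
  simpa using hN.RPSet_subset σ⁻¹ (σ a) (σ b)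

/-- Neutrality via P-sets: an implementable `f` on `𝕋ⁿ = ℝ^{m×n}`
is neutral iff all its `P`-sets (over pairs of distinct alternatives) coincide. -/
theorem neutral_iff_psets_equal
    {n : ℕ} {A : Type*} [Fintype A] [DecidableEq A]
    (hn : 0 < n) (hA : 3 ≤ Fintype.card A)
    (f : Profile n A → A)
    (hf : Implementable f) :
    Neutral f ↔ ∀ a b c d : A, a ≠ b → c ≠ d → RPSet f a b = RPSet f c d :=
  neutral_iff_psets_equal_general f hf
end

section
/- Suppose 𝕋ⁿ = ℝ^{m×n}, f is implementable and satisfies non-imposition. Define κ : A → ℝ by κ(a) = 0 for a ∈ C^f(0) and κ(a) = inf{ε ∈ ℝ, ε ≥ 0 : a ∈ C^f(1^a_ε)} for a ∉ C^f(0), where 1^a_ε is the profile whose column for a is ε·𝟙 and whose other columns are zero. Let t be the type profile with t^a = κ(a)·𝟙 for every a ∈ A. Then C^f(t) = A. -/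
open Function

/-!
Implementability makes `f` weakly monotone agent by agent, so whether `a ∈ C^f(t)` depends only
on the margins `t^a - t^b`, and the sets `P(a,b)` of margins at which `a` is in the choice set
are upward closed, contain no pair `α ∈ P(a,b)`, `β ∈ P(b,a)` with `α + β ≪ 0`, and are
transitive up to an arbitrarily small slack. Since `b` is not in the choice set at `1^b_e` for
`e < κ(b)`, some other alternative `y` has margin `-e·𝟙` over `b`; chaining with
`(κ(a) + η)·𝟙 ∈ P(a,y)` puts `(κ(a) - κ(b) + η)·𝟙` into `P(a,b)` for every `η > 0`. If raising
column `a` of the profile `κ` by `ε ≫ 0` led to the choice of some `y ≠ a`, then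
`(κ(y) - κ(a))·𝟙 - ε ∈ P(y,a)` would contradict `(κ(a) - κ(y) + η)·𝟙 ∈ P(a,y)` for `η < min ε`.
-/

lemma exists_pos_forall_lt {ι : Type*} [Finite ι] {g : ι → ℝ} (hg : ∀ i, 0 < g i) :
    ∃ δ > 0, ∀ i, δ < g i := by
  -- the extra point `none ↦ 1` keeps the minimum defined when `ι` is empty
  obtain ⟨j, hj⟩ := Finite.exists_min fun o : Option ι => o.elim 1 g
  have hpos : 0 < j.elim 1 g := by cases j <;> simp [hg]
  exact ⟨j.elim 1 g / 2, half_pos hpos, fun i => (half_lt_self hpos).trans_le (hj (some i))⟩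

section Monotonicity

variable {n : ℕ} {A : Type*} {f : Profile n A → A} {p : Profile n A → Fin n → ℝ}

lemma Implements.apply_eq_of_sub_lt_of_row (hp : Implements f p) {t s : Profile n A} {a : A}
    {i : Fin n} (hrow : ∀ j, j ≠ i → ∀ b, s b j = t b j) (hft : f t = a)
    (hlt : ∀ b, b ≠ a → t a i - t b i < s a i - s b i) : f s = a := by
  by_contra hne
  have hts := hp t s i hrow
  have hst := hp s t i fun j hj b => (hrow j hj b).symm
  rw [hft] at hts hst
  linarith [hlt _ hne]

/-- Change the rows of `t` into those of `s` one agent at a time. -/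
lemma Implements.apply_eq_of_sub_lt (hp : Implements f p) {t s : Profile n A} {a : A}
    (hft : f t = a) (hlt : ∀ i, ∀ b, b ≠ a → t a i - t b i < s a i - s b i) : f s = a := by
  classical
  suffices h : ∀ S : Finset (Fin n), f (fun b i => if i ∈ S then s b i else t b i) = a by
    simpa using h Finset.univ
  intro S
  induction S using Finset.induction_on with
  | empty => simpa using hft
  | insert j S hj ih =>
    refine hp.apply_eq_of_sub_lt_of_row (i := j) (fun k hk b => ?_) ih fun b hb => ?_
    · simp [Finset.mem_insert, hk]
    · simpa [hj] using hlt j b hb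

end Monotonicity

section ChoiceSet

variable {n : ℕ} {A : Type*} [DecidableEq A] {f : Profile n A → A} {p : Profile n A → Fin n → ℝ}

lemma Implements.apply_mem_choiceSet_s19 (hp : Implements f p) (t : Profile n A) :
    f t ∈ ChoiceSet f t := fun ε hε =>
  hp.apply_eq_of_sub_lt rfl fun i b hb => by
    simp only [update_self, update_of_ne hb, Pi.add_apply]
    linarith [hε i]

lemma Implements.apply_eq_of_mem_choiceSet_s19 [Finite A] (hp : Implements f p)
    {t s : Profile n A} {a : A} (ha : a ∈ ChoiceSet f t)
    (hlt : ∀ i, ∀ c, c ≠ a → t a i - t c i < s a i - s c i) : f s = a := by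
  choose ε hε hεlt using fun i => exists_pos_forall_lt (ι := {c // c ≠ a})
    (g := fun c => (s a i - s c i) - (t a i - t c i)) fun c => sub_pos.2 (hlt i c c.2)
  refine hp.apply_eq_of_sub_lt (ha ε hε) fun i c hc => ?_
  simp only [update_self, update_of_ne hc, Pi.add_apply]
  linarith [hεlt i ⟨c, hc⟩]

lemma Implements.mem_choiceSet_of_sub_le [Finite A] (hp : Implements f p)
    {t s : Profile n A} {a : A} (ha : a ∈ ChoiceSet f t)
    (hle : ∀ i, ∀ c, c ≠ a → t a i - t c i ≤ s a i - s c i) : a ∈ ChoiceSet f s :=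
  fun ε hε => hp.apply_eq_of_mem_choiceSet_s19 ha fun i c hc => by
    simp only [update_self, update_of_ne hc, Pi.add_apply]
    linarith [hle i c hc, hε i]

end ChoiceSet

section RPSet

variable {n : ℕ} {A : Type*} [DecidableEq A] [Finite A] {f : Profile n A → A}
  {p : Profile n A → Fin n → ℝ}

lemma Implements.mem_rpSet_of_le (hp : Implements f p) {a b : A} (hab : a ≠ b)
    {α β : Fin n → ℝ} (hα : α ∈ RPSet f a b) (hαβ : α ≤ β) : β ∈ RPSet f a b := by
  obtain ⟨t, ha, rfl⟩ := hα
  refine ⟨update t a (t a + (β - (t a - t b))), hp.mem_choiceSet_of_sub_le ha fun i c hc => ?_, ?_⟩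
  · simp only [update_self, update_of_ne hc, Pi.add_apply, Pi.sub_apply]
    linarith [hαβ i, Pi.sub_apply (t a) (t b) i]
  · ext i
    simp only [update_self, update_of_ne hab.symm, Pi.add_apply, Pi.sub_apply]
    ring

/-- A profile whose margin of `a` over `b` lies strictly between `t^a - t^b` and `-(t'^b - t'^a)`,
with all other columns very low, would have to select both `a` and `b`. -/
lemma Implements.exists_nonneg_add_of_mem_rpSet (hp : Implements f p) {a b : A} (hab : a ≠ b)
    {α β : Fin n → ℝ} (hα : α ∈ RPSet f a b) (hβ : β ∈ RPSet f b a) : ∃ i, 0 ≤ α i + β i := by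
  obtain ⟨t, ha, rfl⟩ := hα
  obtain ⟨t', hb, rfl⟩ := hβ
  by_contra! hneg
  simp only [Pi.sub_apply] at hneg
  set m : Fin n → ℝ := fun i => ((t a i - t b i) - (t' b i - t' a i)) / 2
  obtain ⟨M, hM⟩ := Finite.exists_le fun ic : Fin n × A =>
    max (t a ic.1 - t ic.2 ic.1 - m ic.1) (t' b ic.1 - t' ic.2 ic.1)
  set w : Profile n A := fun c => if c = a then m else if c = b then 0 else fun _ => -(M + 1)
  have hwa : w a = m := if_pos rfl
  have hwb : w b = 0 := by simp [w, hab.symm]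
  have hwc : ∀ c, c ≠ a → c ≠ b → w c = fun _ => -(M + 1) := fun c hca hcb => by
    simp [w, hca, hcb]
  have hfa : f w = a := hp.apply_eq_of_mem_choiceSet_s19 ha fun i c hca => by
    rcases eq_or_ne c b with rfl | hcb
    · simp only [hwa, hwb, m, Pi.zero_apply]
      linarith [hneg i]
    · simp only [hwa, hwc c hca hcb]
      linarith [le_max_left _ _ |>.trans (hM (i, c))]
  have hfb : f w = b := hp.apply_eq_of_mem_choiceSet_s19 hb fun i c hcb => by
    rcases eq_or_ne c a with rfl | hca
    · simp only [hwa, hwb, m, Pi.zero_apply]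
      linarith [hneg i]
    · simp only [hwb, hwc c hca hcb, Pi.zero_apply]
      linarith [le_max_right _ _ |>.trans (hM (i, c))]
  exact hab (hfa.symm.trans hfb)

/-- Test the profile with columns `α + β + ε`, `β + ε/2`, `0` at `a`, `b`, `c` and very low
columns elsewhere: every alternative other than `a` is excluded by the previous lemma. -/
lemma Implements.add_add_mem_rpSet (hp : Implements f p) {a b c : A} (hab : a ≠ b) (hbc : b ≠ c)
    (hac : a ≠ c) {α β : Fin n → ℝ} (hα : α ∈ RPSet f a b) (hβ : β ∈ RPSet f b c) {ε : ℝ}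
    (hε : 0 < ε) : (fun i => α i + β i + ε) ∈ RPSet f a c := by
  obtain ⟨t, hb, rfl⟩ := hβ
  obtain ⟨M, hM⟩ := Finite.exists_le fun id : Fin n × A => t c id.1 - t id.2 id.1
  set u : Profile n A := fun d =>
    if d = a then fun i => α i + (t b i - t c i) + ε
    else if d = b then fun i => t b i - t c i + ε / 2
    else if d = c then 0 else fun _ => -(M + 1)
  have hua : u a = fun i => α i + (t b i - t c i) + ε := if_pos rfl
  have hub : u b = fun i => t b i - t c i + ε / 2 := by simp [u, hab.symm]
  have huc : u c = 0 := by simp [u, hac.symm, hbc.symm]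
  have hy := hp.apply_mem_choiceSet_s19 u
  by_cases hya : f u = a
  · exact ⟨u, hya ▸ hy, by rw [hua, huc]; ext; simp⟩
  exfalso
  by_cases hyb : f u = b
  · obtain ⟨i, hi⟩ := hp.exists_nonneg_add_of_mem_rpSet hab hα ⟨u, hyb ▸ hy, rfl⟩
    simp only [Pi.sub_apply, hua, hub] at hi
    linarith
  obtain ⟨i, hi⟩ := hp.exists_nonneg_add_of_mem_rpSet (Ne.symm hyb) ⟨t, hb, rfl⟩ ⟨u, hy, rfl⟩
  rcases eq_or_ne (f u) c with hyc | hyc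
  · simp only [Pi.sub_apply, hyc, huc, hub, Pi.zero_apply] at hi
    linarith
  · have hud : ∀ d, d ≠ a → d ≠ b → d ≠ c → u d = fun _ => -(M + 1) := fun d hda hdb hdc => by
      simp [u, hda, hdb, hdc]
    simp only [Pi.sub_apply, hud _ hya hyb hyc, hub] at hi
    linarith [hM (i, f u)]

end RPSet

section Threshold

variable {n : ℕ} {A : Type*} [DecidableEq A] {f : Profile n A → A}
  {p : Profile n A → Fin n → ℝ}

@[simp]
lemma oneProf_apply_self (a : A) (e : ℝ) (i : Fin n) : OneProf a e a i = e := by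
  simp [OneProf]

lemma oneProf_apply_of_ne {a c : A} (hc : c ≠ a) (e : ℝ) (i : Fin n) : OneProf a e c i = 0 := by
  simp [OneProf, hc]

lemma oneProf_zero (a : A) : (OneProf a 0 : Profile n A) = 0 := by
  ext c i
  rcases eq_or_ne c a with rfl | hc
  · simp
  · simp [oneProf_apply_of_ne hc]

/-- The informal `κ`; `sInf ∅ = 0` is harmless since the set is nonempty under
non-imposition. -/
noncomputable def choiceThreshold (f : Profile n A → A) (a : A) : ℝ :=
  sInf {ε : ℝ | 0 ≤ ε ∧ a ∈ ChoiceSet f (OneProf a ε)}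

lemma choiceThreshold_nonneg (a : A) : 0 ≤ choiceThreshold f a :=
  Real.sInf_nonneg fun _ h => h.1

lemma choiceThreshold_le {a : A} {e : ℝ} (he : 0 ≤ e) (ha : a ∈ ChoiceSet f (OneProf a e)) :
    choiceThreshold f a ≤ e :=
  csInf_le ⟨0, fun _ h => h.1⟩ ⟨he, ha⟩

lemma choiceThreshold_eq_zero {a : A} (ha : a ∈ ChoiceSet f (0 : Profile n A)) :
    choiceThreshold f a = 0 :=
  (choiceThreshold_le le_rfl (by rwa [oneProf_zero])).antisymm (choiceThreshold_nonneg a)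

variable [Finite A]

lemma Implements.mem_choiceSet_oneProf_of_le (hp : Implements f p) {a : A} {e e' : ℝ}
    (ha : a ∈ ChoiceSet f (OneProf a e)) (he : e ≤ e') : a ∈ ChoiceSet f (OneProf a e') :=
  hp.mem_choiceSet_of_sub_le ha fun i c hc => by simp [oneProf_apply_of_ne hc, he]

lemma Implements.exists_mem_choiceSet_oneProf (hp : Implements f p) (hni : NonImposition f)
    (a : A) : ∃ e, 0 ≤ e ∧ a ∈ ChoiceSet f (OneProf a e) := by
  obtain ⟨t, rfl⟩ := hni a
  obtain ⟨M, hM⟩ := Finite.exists_le fun ic : Fin n × A => t (f t) ic.1 - t ic.2 ic.1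
  refine ⟨max M 0, le_max_right _ _,
    hp.mem_choiceSet_of_sub_le (hp.apply_mem_choiceSet_s19 t) fun i c hc => ?_⟩
  simp only [oneProf_apply_self, oneProf_apply_of_ne hc, sub_zero]
  linarith [hM (i, c), le_max_left M 0]

lemma Implements.mem_choiceSet_oneProf_choiceThreshold_add (hp : Implements f p)
    (hni : NonImposition f) (a : A) {η : ℝ} (hη : 0 < η) :
    a ∈ ChoiceSet f (OneProf a (choiceThreshold f a + η)) := by
  obtain ⟨e, he, hlt⟩ := exists_lt_of_csInf_lt (hp.exists_mem_choiceSet_oneProf hni a)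
    (lt_add_of_pos_right (choiceThreshold f a) hη)
  exact hp.mem_choiceSet_oneProf_of_le he.2 hlt.le

lemma Implements.exists_sub_mem_rpSet_of_notMem_choiceSet (hp : Implements f p)
    {s : Profile n A} {x : A} (hx : x ∉ ChoiceSet f s) : ∃ y ≠ x, s y - s x ∈ RPSet f y x := by
  obtain ⟨ε, hε, hne⟩ : ∃ ε : Fin n → ℝ, (∀ i, 0 < ε i) ∧ f (update s x (s x + ε)) ≠ x := by
    by_contra! h
    exact hx h
  refine ⟨_, hne, hp.mem_rpSet_of_le hne ⟨_, hp.apply_mem_choiceSet_s19 _, rfl⟩ fun i => ?_⟩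
  simp only [Pi.sub_apply, update_self, update_of_ne hne, Pi.add_apply]
  linarith [hε i]

/-- Below its threshold `x` loses at `1^x_e` to some `y`, which beats `x` by the margin `-e·𝟙`;
then chain `a` over `y` over `x`. -/
lemma Implements.choiceThreshold_sub_add_mem_rpSet (hp : Implements f p) (hni : NonImposition f)
    {a x : A} (hax : a ≠ x) {η : ℝ} (hη : 0 < η) :
    (fun _ => choiceThreshold f a - choiceThreshold f x + η) ∈ RPSet f a x := by
  have hθa : ∀ c, c ≠ a → ∀ η' > 0, (fun _ => choiceThreshold f a + η') ∈ RPSet f a c :=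
    fun c hc η' hη' => ⟨_, hp.mem_choiceSet_oneProf_choiceThreshold_add hni a hη',
      by ext; simp [oneProf_apply_of_ne hc]⟩
  rcases (choiceThreshold_nonneg (f := f) x).eq_or_lt with hx0 | hxpos
  · exact hp.mem_rpSet_of_le hax (hθa x hax.symm η hη) fun _ => by linarith
  set e := max 0 (choiceThreshold f x - η / 2)
  have hxe : x ∉ ChoiceSet f (OneProf x e) := fun h =>
    (choiceThreshold_le (le_max_left _ _) h).not_gt (max_lt hxpos (by linarith))
  obtain ⟨y, hyx, hy⟩ := hp.exists_sub_mem_rpSet_of_notMem_choiceSet hxe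
  have hyx' : (fun _ => -e) ∈ RPSet f y x := by
    convert hy using 1
    ext
    simp [oneProf_apply_of_ne hyx]
  have he : choiceThreshold f x - η / 2 ≤ e := le_max_right _ _
  rcases eq_or_ne y a with rfl | hya
  · exact hp.mem_rpSet_of_le hax hyx' fun _ => by linarith [choiceThreshold_nonneg (f := f) y]
  · refine hp.mem_rpSet_of_le hax (hp.add_add_mem_rpSet hya.symm hyx hax
      (hθa y hya (η / 4) (by positivity)) hyx' (ε := η / 4) (by positivity)) fun _ => ?_
    linarith

end Threshold

theorem choiceSet_at_kappa_profile_univ_general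
    {n : ℕ} {A : Type*} [Fintype A] [DecidableEq A]
    (f : Profile n A → A)
    (hf : Implementable f) (hni : NonImposition f)
    (κ : A → ℝ)
    (hκ0 : ∀ a ∈ ChoiceSet f (0 : Profile n A), κ a = 0)
    (hκ1 : ∀ a ∉ ChoiceSet f (0 : Profile n A),
      κ a = sInf {ε : ℝ | 0 ≤ ε ∧ a ∈ ChoiceSet f (OneProf a ε)}) :
    ChoiceSet f (fun a _ => κ a) = (Set.univ : Set A) := by
  obtain ⟨p, hp⟩ := hf
  obtain rfl : κ = choiceThreshold f := funext fun a => by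
    by_cases ha : a ∈ ChoiceSet f (0 : Profile n A)
    · rw [hκ0 a ha, choiceThreshold_eq_zero ha]
    · exact hκ1 a ha
  refine Set.eq_univ_of_forall fun a ε hε => ?_
  by_contra hne
  obtain ⟨η, hη, hηε⟩ := exists_pos_forall_lt hε
  obtain ⟨i, hi⟩ := hp.exists_nonneg_add_of_mem_rpSet (Ne.symm hne)
    (hp.choiceThreshold_sub_add_mem_rpSet hni (Ne.symm hne) hη) ⟨_, hp.apply_mem_choiceSet_s19 _, rfl⟩
  simp only [Pi.sub_apply, update_self, update_of_ne hne, Pi.add_apply] at hi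
  linarith [hηε i]

/-- with `κ a = 0` for `a ∈ C^f(0)` and
`κ a = inf {ε ≥ 0 : a ∈ C^f(1^a_ε)}` otherwise, the profile `t` with
`t^a = κ(a)·𝟙` for every `a` has `C^f(t) = A`. -/
theorem choiceSet_at_kappa_profile_univ
    {n : ℕ} {A : Type*} [Fintype A] [DecidableEq A]
    (hn : 0 < n) (hA : 3 ≤ Fintype.card A)
    (f : Profile n A → A)
    (hf : Implementable f) (hni : NonImposition f)
    (κ : A → ℝ)
    (hκ0 : ∀ a ∈ ChoiceSet f (0 : Profile n A), κ a = 0)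
    (hκ1 : ∀ a ∉ ChoiceSet f (0 : Profile n A),
      κ a = sInf {ε : ℝ | 0 ≤ ε ∧ a ∈ ChoiceSet f (OneProf a ε)}) :
    ChoiceSet f (fun a _ => κ a) = (Set.univ : Set A) :=
  choiceSet_at_kappa_profile_univ_general f hf hni κ hκ0 hκ1
end
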